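/- Let p > 0 and a ∈ (0,1). Define Ψ_{p,α}(λ) = |ln λ|^{2−p}/(λ + α·|ln λ|²) for λ ∈ (0,a]. Then there exist a constant C > 0 and ᾱ ∈ (0,1) such that for every α ∈ (0,ᾱ], the supremum of Ψ_{p,α} over (0,a] satisfies sup_{0<λ≤a} Ψ_{p,α}(λ) ≤ C · α^{−1}·|ln α|^{−p}. -/
import Mathlib


/-- For `p > 0`, `α > 0` and `λ ∈ (0,1)`, the function
`Ψ_{p,α}(λ) = |log λ|^{2−p}/(λ + α·|log λ|²)`. -/
noncomputable def PsiFun (p α lam : ℝ) : ℝ :=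
  |Real.log lam| ^ ((2 : ℝ) - p) / (lam + α * |Real.log lam| ^ 2)

lemma abs_log_le_rpow {α ε : ℝ} (h0 : 0 < α) (h1 : α < 1) (hε : 0 < ε) :
    |Real.log α| ≤ ε⁻¹ * α ^ (-ε) := by
  rw [abs_of_neg (Real.log_neg h0 h1), ← Real.log_inv]
  have hinv : (0:ℝ) < α⁻¹ := by positivity
  have h := Real.log_le_sub_one_of_pos (x := (α⁻¹) ^ ε) (by positivity)
  rw [Real.log_rpow hinv] at h
  have h2 : ε * Real.log α⁻¹ ≤ α⁻¹ ^ ε := by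
    have := Real.rpow_pos_of_pos hinv ε
    linarith
  have h3 : Real.log α⁻¹ ≤ ε⁻¹ * α⁻¹ ^ ε := by
    have := (le_div_iff₀' hε).mpr h2
    simpa [div_eq_inv_mul] using this
  have h4 : (α⁻¹ : ℝ) ^ ε = α ^ (-ε) := by
    rw [Real.rpow_neg h0.le, ← Real.inv_rpow h0.le]
  rw [h4] at h3
  exact h3

lemma key_bound {q α : ℝ} (hq : 0 < q) (h0 : 0 < α) (h1 : α < 1) :
    α ^ ((1:ℝ)/2) * |Real.log α| ^ q ≤ (2*q) ^ q := by
  have hε : (0:ℝ) < (2*q)⁻¹ := by positivity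
  have h := abs_log_le_rpow h0 h1 hε
  have h1' : |Real.log α| ^ q ≤ ((2*q) * α ^ (-(2*q)⁻¹)) ^ q := by
    apply Real.rpow_le_rpow (abs_nonneg _) _ hq.le
    simpa using h
  have h2 : ((2*q) * α ^ (-(2*q)⁻¹)) ^ q = (2*q)^q * α ^ (-(1:ℝ)/2) := by
    rw [Real.mul_rpow (by positivity) (by positivity), ← Real.rpow_mul h0.le]
    have hexp : -(2*q)⁻¹ * q = -1/2 := by
      rw [neg_mul, neg_div, neg_inj, inv_mul_eq_div,
        div_eq_div_iff (by positivity) (by norm_num : (2:ℝ) ≠ 0)]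
      ring
    rw [hexp]
  calc α ^ ((1:ℝ)/2) * |Real.log α| ^ q
      ≤ α ^ ((1:ℝ)/2) * ((2*q)^q * α ^ (-(1:ℝ)/2)) := by
        apply mul_le_mul_of_nonneg_left _ (by positivity)
        rw [← h2]; exact h1'
    _ = (2*q)^q * (α ^ ((1:ℝ)/2) * α ^ (-(1:ℝ)/2)) := by ring
    _ = (2*q)^q := by
        rw [← Real.rpow_add h0]
        norm_num

/-- Let `p > 0` and `a ∈ (0,1)`. Then there exist a constant `C > 0` and `ᾱ ∈ (0,1)`
such that for every `α ∈ (0,ᾱ]`, the supremum of `Ψ_{p,α}` over `(0,a]` satisfies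
`sup_{0<λ≤a} Ψ_{p,α}(λ) ≤ C · α⁻¹·|log α|^{−p}`. -/
theorem stmt6 (p a : ℝ) (hp : 0 < p) (ha0 : 0 < a) (ha1 : a < 1) :
    ∃ C > (0 : ℝ), ∃ αbar ∈ Set.Ioo (0 : ℝ) 1,
      ∀ α ∈ Set.Ioc (0 : ℝ) αbar, ∀ lam ∈ Set.Ioc (0 : ℝ) a,
        PsiFun p α lam ≤ C * (α⁻¹ * |Real.log α| ^ (-p)) := by
  have hloga : Real.log a < 0 := Real.log_neg ha0 ha1
  set b : ℝ := -Real.log a with hbdef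
  have hb : 0 < b := by simp only [hbdef]; linarith
  refine ⟨(2:ℝ)^p + b ^ ((2:ℝ)-p) * (2*p)^p + (2:ℝ)^(p-2) * 16, by positivity,
    a^2, ⟨by positivity, by nlinarith⟩, ?_⟩
  rintro α ⟨hα0, hαbar⟩ lam ⟨hlam0, hlama⟩
  have hα1 : α < 1 := lt_of_le_of_lt hαbar (by nlinarith)
  have hlogα : Real.log α < 0 := Real.log_neg hα0 hα1
  have hA : 0 < |Real.log α| := abs_pos.mpr hlogα.ne
  set L : ℝ := |Real.log lam| with hLdef
  have hlam1 : lam < 1 := lt_of_le_of_lt hlama ha1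
  have hloglam : Real.log lam < 0 := Real.log_neg hlam0 hlam1
  have hLeq : L = -Real.log lam := abs_of_neg hloglam
  have hLb : b ≤ L := by
    rw [hLeq, hbdef]
    have := Real.log_le_log hlam0 hlama
    linarith
  have hL0 : 0 < L := lt_of_lt_of_le hb hLb
  have hK : 0 < α⁻¹ * |Real.log α| ^ (-p) := by positivity
  have hnat : L ^ (2:ℕ) = L ^ (2:ℝ) := by
    rw [← Real.rpow_natCast L 2]; norm_num
  rcases le_or_gt lam (α ^ ((1:ℝ)/2)) with hcase | hcase
  · -- small lam: L ≥ |log α|/2, use denominator ≥ α L²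
    have hL2 : |Real.log α| / 2 ≤ L := by
      have h := Real.log_le_log hlam0 hcase
      rw [Real.log_rpow hα0] at h
      rw [hLeq, abs_of_neg hlogα]
      linarith
    have step1 : PsiFun p α lam ≤ α⁻¹ * L ^ (-p) := by
      unfold PsiFun
      have hd1 : 0 < α * L ^ 2 := by positivity
      calc L ^ ((2:ℝ)-p) / (lam + α * L ^ 2)
          ≤ L ^ ((2:ℝ)-p) / (α * L ^ 2) := by
            apply div_le_div_of_nonneg_left (by positivity) hd1
            linarith
        _ = α⁻¹ * L ^ (-p) := by
            rw [hnat]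
            rw [show L ^ ((2:ℝ)-p) = L ^ (-p) * L ^ (2:ℝ) by
              rw [← Real.rpow_add hL0]; ring_nf]
            have h2 : (0:ℝ) < L ^ (2:ℝ) := Real.rpow_pos_of_pos hL0 _
            field_simp
    have step2 : L ^ (-p) ≤ (2:ℝ)^p * |Real.log α| ^ (-p) := by
      have h1' : (|Real.log α| / 2) ^ (-p) ≥ L ^ (-p) :=
        Real.rpow_le_rpow_of_nonpos (by positivity) hL2 (by linarith)
      have h2' : (|Real.log α| / 2) ^ (-p) = (2:ℝ)^p * |Real.log α| ^ (-p) := by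
        rw [Real.div_rpow (abs_nonneg _) (by norm_num), div_eq_mul_inv,
          ← Real.rpow_neg (by norm_num : (0:ℝ) ≤ 2)]
        ring_nf
      linarith [h2' ▸ h1']
    calc PsiFun p α lam ≤ α⁻¹ * L ^ (-p) := step1
      _ ≤ α⁻¹ * ((2:ℝ)^p * |Real.log α| ^ (-p)) := by
          apply mul_le_mul_of_nonneg_left step2 (by positivity)
      _ = (2:ℝ)^p * (α⁻¹ * |Real.log α| ^ (-p)) := by ring
      _ ≤ ((2:ℝ)^p + b ^ ((2:ℝ)-p) * (2*p)^p + (2:ℝ)^(p-2) * 16)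
            * (α⁻¹ * |Real.log α| ^ (-p)) := by
          apply mul_le_mul_of_nonneg_right _ hK.le
          have h1' : 0 < b ^ ((2:ℝ)-p) * (2*p)^p := by positivity
          have h2' : 0 < (2:ℝ)^(p-2) * 16 := by positivity
          linarith
  · -- large lam: L ≤ |log α|/2 and 1/lam ≤ α^{-1/2}
    have hLu : L ≤ |Real.log α| / 2 := by
      have h := Real.log_lt_log (Real.rpow_pos_of_pos hα0 _) hcase
      rw [Real.log_rpow hα0] at h
      rw [hLeq, abs_of_neg hlogα]
      linarith
    set S : ℝ := b ^ ((2:ℝ)-p) + (|Real.log α| / 2) ^ ((2:ℝ)-p) with hSdef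
    have hS0 : 0 < S := by positivity
    have hS : L ^ ((2:ℝ)-p) ≤ S := by
      rcases le_total p 2 with h | h
      · have h1' : L ^ ((2:ℝ)-p) ≤ (|Real.log α| / 2) ^ ((2:ℝ)-p) :=
          Real.rpow_le_rpow hL0.le hLu (by linarith)
        have h2' : 0 < b ^ ((2:ℝ)-p) := Real.rpow_pos_of_pos hb _
        rw [hSdef]; linarith
      · have h1' : L ^ ((2:ℝ)-p) ≤ b ^ ((2:ℝ)-p) :=
          Real.rpow_le_rpow_of_nonpos hb hLb (by linarith)
        have h2' : 0 < (|Real.log α| / 2) ^ ((2:ℝ)-p) :=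
          Real.rpow_pos_of_pos (by positivity) _
        rw [hSdef]; linarith
    have hΨ : PsiFun p α lam ≤ S * α ^ (-(1:ℝ)/2) := by
      unfold PsiFun
      calc L ^ ((2:ℝ)-p) / (lam + α * L ^ 2)
          ≤ L ^ ((2:ℝ)-p) / lam := by
            apply div_le_div_of_nonneg_left (by positivity) hlam0
            nlinarith [sq_nonneg L]
        _ ≤ S / lam := by gcongr
        _ = S * lam⁻¹ := div_eq_mul_inv _ _
        _ ≤ S * α ^ (-(1:ℝ)/2) := by
            apply mul_le_mul_of_nonneg_left _ hS0.le
            rw [show (-(1:ℝ)/2) = -((1:ℝ)/2) by norm_num,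
              Real.rpow_neg hα0.le]
            exact inv_anti₀ (Real.rpow_pos_of_pos hα0 _) hcase.le
    -- algebra: S * α^{-1/2} = (S * α^{1/2} * |log α|^p) * (α⁻¹ * |log α|^{-p})
    have halg : α ^ (-(1:ℝ)/2) = α ^ ((1:ℝ)/2) * α⁻¹ := by
      rw [← Real.rpow_neg_one α, ← Real.rpow_add hα0]
      norm_num
    have hcancel : |Real.log α| ^ p * |Real.log α| ^ (-p) = 1 := by
      rw [← Real.rpow_add hA]; simp
    have hfact : S * α ^ (-(1:ℝ)/2)
        = (S * α ^ ((1:ℝ)/2) * |Real.log α| ^ p) * (α⁻¹ * |Real.log α| ^ (-p)) := by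
      rw [halg]
      calc S * (α ^ ((1:ℝ)/2) * α⁻¹)
          = S * α ^ ((1:ℝ)/2) * α⁻¹ * (|Real.log α| ^ p * |Real.log α| ^ (-p)) := by
            rw [hcancel]; ring
        _ = (S * α ^ ((1:ℝ)/2) * |Real.log α| ^ p) * (α⁻¹ * |Real.log α| ^ (-p)) := by
            ring
    have hT : S * α ^ ((1:ℝ)/2) * |Real.log α| ^ p
        ≤ (2:ℝ)^p + b ^ ((2:ℝ)-p) * (2*p)^p + (2:ℝ)^(p-2) * 16 := by
      have e1 : (|Real.log α| / 2) ^ ((2:ℝ)-p)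
          = |Real.log α| ^ ((2:ℝ)-p) * (2:ℝ)^(p-2) := by
        rw [Real.div_rpow (abs_nonneg _) (by norm_num), div_eq_mul_inv,
          ← Real.rpow_neg (by norm_num : (0:ℝ) ≤ 2)]
        ring_nf
      have e2 : |Real.log α| ^ ((2:ℝ)-p) * |Real.log α| ^ p
          = |Real.log α| ^ (2:ℝ) := by
        rw [← Real.rpow_add hA]; ring_nf
      have hT1 : b ^ ((2:ℝ)-p) * (α ^ ((1:ℝ)/2) * |Real.log α| ^ p)
          ≤ b ^ ((2:ℝ)-p) * (2*p)^p :=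
        mul_le_mul_of_nonneg_left (key_bound hp hα0 hα1)
          (Real.rpow_pos_of_pos hb _).le
      have hkb2 : α ^ ((1:ℝ)/2) * |Real.log α| ^ (2:ℝ) ≤ 16 := by
        have h := key_bound (q := 2) (by norm_num) hα0 hα1
        have : ((2:ℝ)*2) ^ (2:ℝ) = 16 := by
          rw [show ((2:ℝ)*2) = 4 by norm_num,
            show (2:ℝ) = ((2:ℕ):ℝ) by norm_num, Real.rpow_natCast]
          norm_num
        linarith [this ▸ h]
      have hT2 : (|Real.log α| / 2) ^ ((2:ℝ)-p) * α ^ ((1:ℝ)/2) * |Real.log α| ^ p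
          ≤ (2:ℝ)^(p-2) * 16 := by
        rw [e1]
        calc |Real.log α| ^ ((2:ℝ)-p) * (2:ℝ)^(p-2) * α ^ ((1:ℝ)/2) * |Real.log α| ^ p
            = (2:ℝ)^(p-2) * (α ^ ((1:ℝ)/2) * (|Real.log α| ^ ((2:ℝ)-p) * |Real.log α| ^ p)) := by
              ring
          _ = (2:ℝ)^(p-2) * (α ^ ((1:ℝ)/2) * |Real.log α| ^ (2:ℝ)) := by rw [e2]
          _ ≤ (2:ℝ)^(p-2) * 16 :=
              mul_le_mul_of_nonneg_left hkb2 (by positivity)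
      have hexp : S * α ^ ((1:ℝ)/2) * |Real.log α| ^ p
          = b ^ ((2:ℝ)-p) * (α ^ ((1:ℝ)/2) * |Real.log α| ^ p)
            + (|Real.log α| / 2) ^ ((2:ℝ)-p) * α ^ ((1:ℝ)/2) * |Real.log α| ^ p := by
        rw [hSdef]; ring
      have h2p : (0:ℝ) < (2:ℝ)^p := by positivity
      linarith [hexp ▸ (add_le_add hT1 hT2)]
    calc PsiFun p α lam ≤ S * α ^ (-(1:ℝ)/2) := hΨ
      _ = (S * α ^ ((1:ℝ)/2) * |Real.log α| ^ p) * (α⁻¹ * |Real.log α| ^ (-p)) := hfact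
      _ ≤ ((2:ℝ)^p + b ^ ((2:ℝ)-p) * (2*p)^p + (2:ℝ)^(p-2) * 16)
            * (α⁻¹ * |Real.log α| ^ (-p)) :=
          mul_le_mul_of_nonneg_right hT hK.le
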